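/- arXiv:math/0007170 — 6 statements merged into one kernel-verified Lean document; each statement's English description precedes it below -/
import Mathlib

section
/- Let p be a prime, let q₁, q₂ be nonzero elements of ℤ/pℤ with q₁ ≠ q₂, and let h ∈ ℤ/pℤ. Then the map S : (ℤ/pℤ)² → (ℤ/pℤ)² given by S(x,y) = (q₁⁻¹·y + (1 − q₂·q₁⁻¹)·x + h, q₂·x − q₁·h) makes (ℤ/pℤ, S) an indecomposable nondegenerate braided set. -/
/-- `S₁ = S × id` acting on the first two factors of `X × X × X`. -/
def braidL {X : Type*} (S : X × X → X × X) : X × X × X → X × X × X :=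
  fun t => ((S (t.1, t.2.1)).1, (S (t.1, t.2.1)).2, t.2.2)

/-- `S₂ = id × S` acting on the last two factors of `X × X × X`. -/
def braidR {X : Type*} (S : X × X → X × X) : X × X × X → X × X × X :=
  fun t => (t.1, S (t.2.1, t.2.2))

/-- A braided set: `S` is a bijection satisfying `S₁S₂S₁ = S₂S₁S₂`. -/
def IsBraidedSet {X : Type*} (S : X × X → X × X) : Prop :=
  Function.Bijective S ∧
    braidL S ∘ braidR S ∘ braidL S = braidR S ∘ braidL S ∘ braidR S

/-- Nondegeneracy: writing `S (x, y) = (g_x y, f_y x)`, each `g_x` and each `f_y`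
is a bijection. -/
def Nondegenerate {X : Type*} (S : X × X → X × X) : Prop :=
  (∀ x, Function.Bijective fun y => (S (x, y)).1) ∧
    (∀ y, Function.Bijective fun x => (S (x, y)).2)

/-- Decomposability of a solution. -/
def Decomposable {X : Type*} (S : X × X → X × X) : Prop :=
  ∃ X₁ X₂ : Set X, X₁.Nonempty ∧ X₂.Nonempty ∧ Disjoint X₁ X₂ ∧ X₁ ∪ X₂ = Set.univ ∧
    (∀ x ∈ X₁, ∀ y ∈ X₁, (S (x, y)).1 ∈ X₁ ∧ (S (x, y)).2 ∈ X₁) ∧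
    (∀ x ∈ X₂, ∀ y ∈ X₂, (S (x, y)).1 ∈ X₂ ∧ (S (x, y)).2 ∈ X₂)

/-- Indecomposability of a solution. -/
def Indecomposable {X : Type*} (S : X × X → X × X) : Prop := ¬ Decomposable S

/-!
Nondegeneracy and the braid relation are direct computations with an affine map. For
indecomposability let `Y` be a block of a decomposition and `σ` the first component of `S`.
As `y ↦ σ(x₀, y)` is injective on the finite set `Y`, it maps `Y` onto `Y`, so comparing
`σ(x₀, y)` with `σ(x₁, y)` shows that `Y` is stable under translation by
`(1 - q₂ q₁⁻¹)(x₁ - x₀)`. If `Y` has two points, this translation is nonzero and forces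
`Y = ℤ/pℤ`. Finally one of the two blocks has two points, since `0`, `q₁`, `q₂` are distinct.
-/

section Field

variable {F : Type*} [Field F]

def affineSolution (q₁ q₂ h : F) : F × F → F × F :=
  fun xy => (q₁⁻¹ * xy.2 + (1 - q₂ * q₁⁻¹) * xy.1 + h, q₂ * xy.1 - q₁ * h)

lemma bijective_mul_add {a : F} (ha : a ≠ 0) (b : F) : Function.Bijective fun x => a * x + b :=
  (Equiv.addRight b).bijective.comp (mulLeft_bijective₀ a ha)

lemma bijective_triangular {α β : Type*} {g : α → β → β} {f : α → α}
    (hf : Function.Bijective f) (hg : ∀ x, Function.Bijective (g x)) :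
    Function.Bijective fun xy : α × β => (g xy.1 xy.2, f xy.1) := by
  constructor
  · rintro ⟨x, y⟩ ⟨x', y'⟩ hxy
    simp only [Prod.mk.injEq] at hxy
    obtain rfl := hf.injective hxy.2
    rw [(hg x).injective hxy.1]
  · rintro ⟨u, v⟩
    obtain ⟨x, rfl⟩ := hf.surjective v
    obtain ⟨y, rfl⟩ := (hg x).surjective u
    exact ⟨(x, y), rfl⟩

lemma bijective_affineSolution_fst {q₁ : F} (hq₁ : q₁ ≠ 0) (q₂ h x : F) :
    Function.Bijective fun y => (affineSolution q₁ q₂ h (x, y)).1 := by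
  simpa only [affineSolution, add_assoc] using bijective_mul_add (inv_ne_zero hq₁) _

lemma bijective_affineSolution_snd (q₁ : F) {q₂ : F} (hq₂ : q₂ ≠ 0) (h y : F) :
    Function.Bijective fun x => (affineSolution q₁ q₂ h (x, y)).2 := by
  simpa only [affineSolution, sub_eq_add_neg] using bijective_mul_add hq₂ (-(q₁ * h))

lemma nondegenerate_affineSolution {q₁ q₂ : F} (hq₁ : q₁ ≠ 0) (hq₂ : q₂ ≠ 0) (h : F) :
    Nondegenerate (affineSolution q₁ q₂ h) :=
  ⟨bijective_affineSolution_fst hq₁ q₂ h, bijective_affineSolution_snd q₁ hq₂ h⟩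

lemma isBraidedSet_affineSolution {q₁ q₂ : F} (hq₁ : q₁ ≠ 0) (hq₂ : q₂ ≠ 0) (h : F) :
    IsBraidedSet (affineSolution q₁ q₂ h) := by
  refine ⟨bijective_triangular (bijective_affineSolution_snd q₁ hq₂ h 0)
    (bijective_affineSolution_fst hq₁ q₂ h), ?_⟩
  funext ⟨x, y, z⟩
  simp only [braidL, braidR, affineSolution, Function.comp_apply, Prod.mk.injEq]
  refine ⟨?_, ?_, trivial⟩ <;> field_simp <;> ring

lemma add_mem_of_affineSolution_fst_mem {q₁ q₂ h : F} (hq₁ : q₁ ≠ 0) {Y : Set F} (hY : Y.Finite)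
    (hcl : ∀ x ∈ Y, ∀ y ∈ Y, (affineSolution q₁ q₂ h (x, y)).1 ∈ Y)
    {x₀ x₁ : F} (hx₀ : x₀ ∈ Y) (hx₁ : x₁ ∈ Y) {u : F} (hu : u ∈ Y) :
    u + (1 - q₂ * q₁⁻¹) * (x₁ - x₀) ∈ Y := by
  have hsurj : Set.SurjOn (fun y => (affineSolution q₁ q₂ h (x₀, y)).1) Y Y :=
    (hY.injOn_iff_bijOn_of_mapsTo (hcl x₀ hx₀)).mp
      ((bijective_affineSolution_fst hq₁ q₂ h x₀).injective.injOn) |>.surjOn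
  obtain ⟨y, hy, rfl⟩ := hsurj hu
  convert hcl x₁ hx₁ y hy using 1
  simp only [affineSolution]
  ring

end Field

lemma ZMod.eq_univ_of_add_mem {p : ℕ} [Fact p.Prime] {Y : Set (ZMod p)} {c : ZMod p} (hc : c ≠ 0)
    (hY : Y.Nonempty) (hadd : ∀ u ∈ Y, u + c ∈ Y) : Y = Set.univ := by
  obtain ⟨x₀, hx₀⟩ := hY
  have hnsmul (n : ℕ) : x₀ + n • c ∈ Y := by
    induction n with
    | zero => simpa using hx₀
    | succ n ih => simpa only [succ_nsmul, ← add_assoc] using hadd _ ih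
  refine Set.eq_univ_of_forall fun z => ?_
  simpa [ZMod.natCast_zmod_val, div_mul_cancel₀ _ hc] using hnsmul ((z - x₀) / c).val

lemma Set.nontrivial_or_nontrivial_of_union_eq_univ {α : Type*} {A B : Set α}
    (hAB : A ∪ B = Set.univ) {a b c : α} (hab : a ≠ b) (hac : a ≠ c) (hbc : b ≠ c) :
    A.Nontrivial ∨ B.Nontrivial := by
  have hmem (x : α) : x ∈ A ∨ x ∈ B := by simp [← Set.mem_union, hAB]
  by_contra! ⟨hA, hB⟩
  have := hmem a; have := hmem b; have := hmem c
  grind [Set.Subsingleton]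

section ZMod

variable {p : ℕ} [Fact p.Prime] {q₁ q₂ h : ZMod p}

lemma eq_univ_of_affineSolution_fst_mem (hq₁ : q₁ ≠ 0) (hne : q₁ ≠ q₂) {Y : Set (ZMod p)}
    (hcl : ∀ x ∈ Y, ∀ y ∈ Y, (affineSolution q₁ q₂ h (x, y)).1 ∈ Y) (hY : Y.Nontrivial) :
    Y = Set.univ := by
  obtain ⟨x₀, hx₀, x₁, hx₁, hx⟩ := hY
  have hcoeff : 1 - q₂ * q₁⁻¹ ≠ 0 :=
    sub_ne_zero.2 fun h₁ => hne ((mul_inv_eq_one₀ hq₁).1 h₁.symm).symm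
  exact ZMod.eq_univ_of_add_mem (mul_ne_zero hcoeff (sub_ne_zero.2 hx.symm)) ⟨x₀, hx₀⟩
    fun u hu => add_mem_of_affineSolution_fst_mem hq₁ Y.toFinite hcl hx₀ hx₁ hu

lemma indecomposable_affineSolution (hq₁ : q₁ ≠ 0) (hq₂ : q₂ ≠ 0) (hne : q₁ ≠ q₂) :
    Indecomposable (affineSolution q₁ q₂ h) := by
  rintro ⟨X₁, X₂, hX₁, hX₂, hdisj, hunion, hcl₁, hcl₂⟩
  have hfull {A B : Set (ZMod p)} (hB : B.Nonempty) (hAB : Disjoint A B)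
      (hcl : ∀ x ∈ A, ∀ y ∈ A, (affineSolution q₁ q₂ h (x, y)).1 ∈ A ∧
        (affineSolution q₁ q₂ h (x, y)).2 ∈ A) (hA : A.Nontrivial) : False := by
    rw [eq_univ_of_affineSolution_fst_mem hq₁ hne (fun x hx y hy => (hcl x hx y hy).1) hA,
      Set.univ_disjoint] at hAB
    exact hB.ne_empty hAB
  rcases Set.nontrivial_or_nontrivial_of_union_eq_univ hunion hq₁.symm hq₂.symm hne with h₁ | h₂
  · exact hfull hX₂ hdisj hcl₁ h₁
  · exact hfull hX₁ hdisj.symm hcl₂ h₂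

end ZMod

/-- Theorem 2.9(1)(i): the affine map
`S(x,y) = (q₁⁻¹ y + (1 - q₂ q₁⁻¹) x + h, q₂ x - q₁ h)` is an indecomposable
nondegenerate braided set on `ℤ/pℤ`. -/
theorem affine_solution_type_i
    {p : ℕ} (hp : p.Prime) (q₁ q₂ h : ZMod p) (hq₁ : q₁ ≠ 0) (hq₂ : q₂ ≠ 0)
    (hne : q₁ ≠ q₂) :
    IsBraidedSet (fun xy : ZMod p × ZMod p =>
        (q₁⁻¹ * xy.2 + (1 - q₂ * q₁⁻¹) * xy.1 + h, q₂ * xy.1 - q₁ * h)) ∧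
    Nondegenerate (fun xy : ZMod p × ZMod p =>
        (q₁⁻¹ * xy.2 + (1 - q₂ * q₁⁻¹) * xy.1 + h, q₂ * xy.1 - q₁ * h)) ∧
    Indecomposable (fun xy : ZMod p × ZMod p =>
        (q₁⁻¹ * xy.2 + (1 - q₂ * q₁⁻¹) * xy.1 + h, q₂ * xy.1 - q₁ * h)) := by
  have : Fact p.Prime := ⟨hp⟩
  exact ⟨isBraidedSet_affineSolution hq₁ hq₂ h, nondegenerate_affineSolution hq₁ hq₂ h,
    indecomposable_affineSolution hq₁ hq₂ hne⟩
end

section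
/- Let p be a prime and let (ℤ/pℤ, S) be an indecomposable nondegenerate affine braided set, i.e. S(x,y) = (a·x + b·y + h, c·x + d·y + t) for some a, b, c, d, h, t ∈ ℤ/pℤ. Then (ℤ/pℤ, S) is isomorphic to one of the following solutions: (i) S(x,y) = (q₁⁻¹·y + (1 − q₂·q₁⁻¹)·x + h', q₂·x − q₁·h') for some nonzero q₁ ≠ q₂ in ℤ/pℤ and h' ∈ ℤ/pℤ; or (ii) S(x,y) = (q₁⁻¹·y + h', q₂·x + (1 − q₂·q₁⁻¹)·y − q₂·h') for some nonzero q₁ ≠ q₂ in ℤ/pℤ and h' ∈ ℤ/pℤ; or (iii) S(x,y) = (y + h₁, x + h₂) for some (h₁, h₂) ≠ (0,0) in (ℤ/pℤ)². -/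
/-!
Comparing coefficients in the braid relation for `S (x, y) = (a x + b y + h, c x + d y + t)`
gives `a d = 0`, `a (a + b c - 1) = 0`, `a (h + b t) = 0` and the mirror relations for `d`,
while nondegeneracy forces `b, c ≠ 0`. If `a ≠ 0` (resp. `d ≠ 0`) these relations put `S` in
form (i) (resp. (ii)) with `q₁ = b⁻¹`, `q₂ = c`, `h' = h`. If `a = d = 0`, then
`S (x, y) = (σ y, τ x)` for two affine bijections `σ`, `τ`, and a common fixed point `x₀` of
`σ` and `τ` would split the solution into `{x₀}` and its complement. The remaining braid
relation `c h + t = b t + h` provides such a fixed point unless `b = c = 1` and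
`(h, t) ≠ (0, 0)`, which is form (iii).
-/

section Decomposition

variable {X : Type*} {S : X × X → X × X}

theorem decomposable_of_isFixedPt [Nontrivial X] {σ τ : X → X} (hN : Nondegenerate S)
    (hσ : ∀ x y, (S (x, y)).1 = σ y) (hτ : ∀ x y, (S (x, y)).2 = τ x) {x₀ : X}
    (hσx₀ : Function.IsFixedPt σ x₀) (hτx₀ : Function.IsFixedPt τ x₀) : Decomposable S := by
  have hσinj : Function.Injective σ := by
    simpa only [hσ] using (hN.1 x₀).injective
  have hτinj : Function.Injective τ := by
    simpa only [hτ] using (hN.2 x₀).injective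
  obtain ⟨y₀, hy₀⟩ := exists_ne x₀
  refine ⟨{x₀}, {x₀}ᶜ, Set.singleton_nonempty x₀, ⟨y₀, hy₀⟩, disjoint_compl_right,
    Set.union_compl_self _, ?_, ?_⟩
  · rintro x rfl y rfl
    simp [hσ, hτ, hσx₀.eq, hτx₀.eq]
  · intro x hx y hy
    simp only [Set.mem_compl_singleton_iff, hσ, hτ] at hx hy ⊢
    exact ⟨fun h => hy (hσinj (h.trans hσx₀.eq.symm)),
      fun h => hx (hτinj (h.trans hτx₀.eq.symm))⟩

end Decomposition

section CommRing

variable {R : Type*} [CommRing R] {S : R × R → R × R} {a b c d h t : R}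

theorem affine_coeff_b_ne_zero [Nontrivial R]
    (hS : ∀ x y, S (x, y) = (a * x + b * y + h, c * x + d * y + t))
    (hN : Nondegenerate S) : b ≠ 0 := by
  intro hb
  have h01 : (S (0, 0)).1 = (S (0, 1)).1 := by simp [hS, hb]
  exact zero_ne_one ((hN.1 0).injective h01)

theorem affine_coeff_c_ne_zero [Nontrivial R]
    (hS : ∀ x y, S (x, y) = (a * x + b * y + h, c * x + d * y + t))
    (hN : Nondegenerate S) : c ≠ 0 := by
  intro hc
  have h01 : (S (0, 0)).2 = (S (1, 0)).2 := by simp [hS, hc]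
  exact zero_ne_one ((hN.2 0).injective h01)

theorem affine_braid_equations
    (hS : ∀ x y, S (x, y) = (a * x + b * y + h, c * x + d * y + t))
    (hYB : braidL S ∘ braidR S ∘ braidL S = braidR S ∘ braidL S ∘ braidR S) (x y z : R) :
    a * (a * x + b * y + h) + b * (a * (c * x + d * y + t) + b * z + h) + h
        = a * x + b * (a * y + b * z + h) + h ∧
      c * (a * x + b * y + h) + d * (a * (c * x + d * y + t) + b * z + h) + t
        = a * (c * x + d * (a * y + b * z + h) + t) + b * (c * y + d * z + t) + h ∧
      c * (c * x + d * y + t) + d * z + t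
        = c * (c * x + d * (a * y + b * z + h) + t) + d * (c * y + d * z + t) + t := by
  simpa only [Function.comp_apply, braidL, braidR, hS, Prod.mk.injEq] using
    congrFun hYB (x, y, z)

theorem affine_braid_relation_of_coeff_a_d_eq_zero
    (hS : ∀ x y, S (x, y) = (a * x + b * y + h, c * x + d * y + t))
    (hYB : braidL S ∘ braidR S ∘ braidL S = braidR S ∘ braidL S ∘ braidR S)
    (ha : a = 0) (hd : d = 0) : c * h + t = b * t + h := by
  subst ha hd
  linear_combination (affine_braid_equations hS hYB 0 0 0).2.1

end CommRing

section Field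

variable {K : Type*} [Field K] {S : K × K → K × K} {a b c d h t : K}

theorem affine_braid_relations_of_coeff_a_ne_zero
    (hS : ∀ x y, S (x, y) = (a * x + b * y + h, c * x + d * y + t))
    (hYB : braidL S ∘ braidR S ∘ braidL S = braidR S ∘ braidL S ∘ braidR S)
    (hb : b ≠ 0) (ha : a ≠ 0) : d = 0 ∧ a = 1 - b * c ∧ h = -(b * t) := by
  have E := affine_braid_equations hS hYB
  have hbad : b * (a * d) = 0 := by linear_combination (E 0 1 0).1 - (E 0 0 0).1
  have haa : a * (a + b * c - 1) = 0 := by linear_combination (E 1 0 0).1 - (E 0 0 0).1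
  have hah : a * (h + b * t) = 0 := by linear_combination (E 0 0 0).1
  refine ⟨(mul_eq_zero.mp ((mul_eq_zero.mp hbad).resolve_left hb)).resolve_left ha, ?_, ?_⟩
  · linear_combination (mul_eq_zero.mp haa).resolve_left ha
  · linear_combination (mul_eq_zero.mp hah).resolve_left ha

theorem affine_braid_relations_of_coeff_d_ne_zero
    (hS : ∀ x y, S (x, y) = (a * x + b * y + h, c * x + d * y + t))
    (hYB : braidL S ∘ braidR S ∘ braidL S = braidR S ∘ braidL S ∘ braidR S)
    (hd : d ≠ 0) : d = 1 - b * c ∧ t = -(c * h) := by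
  have E := affine_braid_equations hS hYB
  have hdd : d * (d + b * c - 1) = 0 := by linear_combination (E 0 0 0).2.2 - (E 0 0 1).2.2
  have hdt : d * (c * h + t) = 0 := by linear_combination -(E 0 0 0).2.2
  constructor
  · linear_combination (mul_eq_zero.mp hdd).resolve_left hd
  · linear_combination (mul_eq_zero.mp hdt).resolve_left hd

theorem exists_common_fixedPt_of_not_translations (hrel : c * h + t = b * t + h)
    (hne : ¬(b = 1 ∧ c = 1 ∧ (h, t) ≠ (0, 0))) :
    ∃ x₀ : K, b * x₀ + h = x₀ ∧ c * x₀ + t = x₀ := by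
  by_cases hb : b = 1
  · by_cases hc : c = 1
    · obtain ⟨rfl, rfl⟩ : h = 0 ∧ t = 0 := by simpa [hb, hc] using hne
      exact ⟨0, by simp, by simp⟩
    · subst hb
      have hc' : 1 - c ≠ 0 := sub_ne_zero_of_ne (Ne.symm hc)
      refine ⟨t / (1 - c), ?_, ?_⟩ <;> field_simp
      · linear_combination -hrel
      · ring
  · have hb' : 1 - b ≠ 0 := sub_ne_zero_of_ne (Ne.symm hb)
    refine ⟨h / (1 - b), ?_, ?_⟩ <;> field_simp
    · ring
    · linear_combination hrel

def IsIsoToSolutionI (S : K × K → K × K) : Prop :=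
  ∃ (q₁ q₂ h' : K) (φ : K ≃ K), q₁ ≠ 0 ∧ q₂ ≠ 0 ∧ q₁ ≠ q₂ ∧ ∀ x y : K,
    φ ((S (x, y)).1) = q₁⁻¹ * φ y + (1 - q₂ * q₁⁻¹) * φ x + h' ∧
    φ ((S (x, y)).2) = q₂ * φ x - q₁ * h'

def IsIsoToSolutionII (S : K × K → K × K) : Prop :=
  ∃ (q₁ q₂ h' : K) (φ : K ≃ K), q₁ ≠ 0 ∧ q₂ ≠ 0 ∧ q₁ ≠ q₂ ∧ ∀ x y : K,
    φ ((S (x, y)).1) = q₁⁻¹ * φ y + h' ∧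
    φ ((S (x, y)).2) = q₂ * φ x + (1 - q₂ * q₁⁻¹) * φ y - q₂ * h'

def IsIsoToSolutionIII (S : K × K → K × K) : Prop :=
  ∃ (h₁ h₂ : K) (φ : K ≃ K), (h₁, h₂) ≠ (0, 0) ∧ ∀ x y : K,
    φ ((S (x, y)).1) = φ y + h₁ ∧ φ ((S (x, y)).2) = φ x + h₂

theorem isIsoToSolutionI_of_coeff_a_ne_zero
    (hS : ∀ x y, S (x, y) = (a * x + b * y + h, c * x + d * y + t))
    (hYB : braidL S ∘ braidR S ∘ braidL S = braidR S ∘ braidL S ∘ braidR S)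
    (hN : Nondegenerate S) (ha : a ≠ 0) : IsIsoToSolutionI S := by
  have hb := affine_coeff_b_ne_zero hS hN
  obtain ⟨hd, ha₁, hh⟩ := affine_braid_relations_of_coeff_a_ne_zero hS hYB hb ha
  refine ⟨b⁻¹, c, h, Equiv.refl K, inv_ne_zero hb, affine_coeff_c_ne_zero hS hN, ?_,
    fun x y => ?_⟩
  · rintro rfl
    exact ha (by rw [ha₁, mul_inv_cancel₀ hb, sub_self])
  · simp only [Equiv.refl_apply, hS, inv_inv, hd, ha₁, hh]
    constructor
    · ring
    · field_simp
      ring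

theorem isIsoToSolutionII_of_coeff_d_ne_zero
    (hS : ∀ x y, S (x, y) = (a * x + b * y + h, c * x + d * y + t))
    (hYB : braidL S ∘ braidR S ∘ braidL S = braidR S ∘ braidL S ∘ braidR S)
    (hN : Nondegenerate S) (ha : a = 0) (hd : d ≠ 0) : IsIsoToSolutionII S := by
  have hb := affine_coeff_b_ne_zero hS hN
  obtain ⟨hd₁, ht⟩ := affine_braid_relations_of_coeff_d_ne_zero hS hYB hd
  refine ⟨b⁻¹, c, h, Equiv.refl K, inv_ne_zero hb, affine_coeff_c_ne_zero hS hN, ?_,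
    fun x y => ?_⟩
  · rintro rfl
    exact hd (by rw [hd₁, mul_inv_cancel₀ hb, sub_self])
  · simp only [Equiv.refl_apply, hS, inv_inv, ha, hd₁, ht]
    constructor <;> ring

theorem isIsoToSolutionIII_of_indecomposable
    (hS : ∀ x y, S (x, y) = (a * x + b * y + h, c * x + d * y + t))
    (hYB : braidL S ∘ braidR S ∘ braidL S = braidR S ∘ braidL S ∘ braidR S)
    (hN : Nondegenerate S) (hI : Indecomposable S) (ha : a = 0) (hd : d = 0) :
    IsIsoToSolutionIII S := by
  have hrel := affine_braid_relation_of_coeff_a_d_eq_zero hS hYB ha hd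
  have hσ : ∀ x y, (S (x, y)).1 = b * y + h := by simp [hS, ha]
  have hτ : ∀ x y, (S (x, y)).2 = c * x + t := by simp [hS, hd]
  obtain ⟨rfl, rfl, hht⟩ : b = 1 ∧ c = 1 ∧ (h, t) ≠ (0, 0) := by
    by_contra hne
    obtain ⟨x₀, hσx₀, hτx₀⟩ := exists_common_fixedPt_of_not_translations hrel hne
    exact hI (decomposable_of_isFixedPt hN hσ hτ hσx₀ hτx₀)
  exact ⟨h, t, Equiv.refl K, hht, fun x y => by simp [hσ, hτ]⟩

end Field

/-- Theorem 2.9(2): every indecomposable nondegenerate affine solution on `ℤ/pℤ`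
is isomorphic to one of the solutions (i), (ii), (iii). -/
theorem affine_solution_classification
    {p : ℕ} (hp : p.Prime) (S : ZMod p × ZMod p → ZMod p × ZMod p)
    (a b c d h t : ZMod p)
    (hS : ∀ x y : ZMod p, S (x, y) = (a * x + b * y + h, c * x + d * y + t))
    (hB : IsBraidedSet S) (hN : Nondegenerate S) (hI : Indecomposable S) :
    (∃ (q₁ q₂ h' : ZMod p) (φ : ZMod p ≃ ZMod p), q₁ ≠ 0 ∧ q₂ ≠ 0 ∧ q₁ ≠ q₂ ∧
      ∀ x y : ZMod p,
        φ ((S (x, y)).1) = q₁⁻¹ * φ y + (1 - q₂ * q₁⁻¹) * φ x + h' ∧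
        φ ((S (x, y)).2) = q₂ * φ x - q₁ * h') ∨
    (∃ (q₁ q₂ h' : ZMod p) (φ : ZMod p ≃ ZMod p), q₁ ≠ 0 ∧ q₂ ≠ 0 ∧ q₁ ≠ q₂ ∧
      ∀ x y : ZMod p,
        φ ((S (x, y)).1) = q₁⁻¹ * φ y + h' ∧
        φ ((S (x, y)).2) = q₂ * φ x + (1 - q₂ * q₁⁻¹) * φ y - q₂ * h') ∨
    (∃ (h₁ h₂ : ZMod p) (φ : ZMod p ≃ ZMod p), (h₁, h₂) ≠ (0, 0) ∧
      ∀ x y : ZMod p,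
        φ ((S (x, y)).1) = φ y + h₁ ∧
        φ ((S (x, y)).2) = φ x + h₂) := by
  have : Fact p.Prime := ⟨hp⟩
  rcases eq_or_ne a 0 with ha | ha
  · rcases eq_or_ne d 0 with hd | hd
    · exact Or.inr (Or.inr (isIsoToSolutionIII_of_indecomposable hS hB.2 hN hI ha hd))
    · exact Or.inr (Or.inl (isIsoToSolutionII_of_coeff_d_ne_zero hS hB.2 hN ha hd))
  · exact Or.inl (isIsoToSolutionI_of_coeff_a_ne_zero hS hB.2 hN ha)
end

section
/- Let p be a prime and let K ∈ ℤ/pℤ with K ≠ 0 and K ≠ 1. If a function f : ℤ/pℤ → ℤ/pℤ satisfies f(K·y + (1 − K)·x) = K·f(y) + (1 − K)·f(x) for all x, y ∈ ℤ/pℤ, then f is affine: there exist c, d ∈ ℤ/pℤ such that f(x) = c·x + d for all x. -/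
/-- Lemma 3.3: a function `f : ℤ/pℤ → ℤ/pℤ` satisfying
`f(K y + (1 - K) x) = K f(y) + (1 - K) f(x)` for some `K ≠ 0, 1` is affine. -/
theorem affine_functional_equation
    {p : ℕ} (hp : p.Prime) (K : ZMod p) (hK0 : K ≠ 0) (hK1 : K ≠ 1)
    (f : ZMod p → ZMod p)
    (hf : ∀ x y : ZMod p, f (K * y + (1 - K) * x) = K * f y + (1 - K) * f x) :
    ∃ c d : ZMod p, ∀ x : ZMod p, f x = c * x + d := by
  haveI : Fact p.Prime := ⟨hp⟩
  have hK1' : (1 : ZMod p) - K ≠ 0 := sub_ne_zero.mpr (Ne.symm hK1)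
  -- f(K y) in terms of f y
  have h1 : ∀ y : ZMod p, f (K * y) = K * f y + (1 - K) * f 0 := by
    intro y
    have := hf 0 y
    simpa using this
  have h2 : ∀ x : ZMod p, f ((1 - K) * x) = K * f 0 + (1 - K) * f x := by
    intro x
    have := hf x 0
    simpa using this
  -- additivity up to f 0
  have hadd : ∀ a b : ZMod p, f (a + b) = f a + f b - f 0 := by
    intro a b
    have ha : K * (K⁻¹ * a) = a := by
      field_simp
    have hb : (1 - K) * ((1 - K)⁻¹ * b) = b := by
      field_simp
    have e := hf ((1 - K)⁻¹ * b) (K⁻¹ * a)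
    rw [ha, hb] at e
    have e1 := h1 (K⁻¹ * a); rw [ha] at e1
    have e2 := h2 ((1 - K)⁻¹ * b); rw [hb] at e2
    have : K * f (K⁻¹ * a) = f a - (1 - K) * f 0 := by linear_combination -e1
    rw [this] at e
    have : (1 - K) * f ((1 - K)⁻¹ * b) = f b - K * f 0 := by linear_combination -e2
    rw [this] at e
    linear_combination e
  -- define g
  set c := f 1 - f 0 with hc
  refine ⟨c, f 0, ?_⟩
  have key : ∀ n : ℕ, f (n : ZMod p) = c * n + f 0 := by
    intro n
    induction n with
    | zero => simp
    | succ k ih =>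
      push_cast
      rw [hadd, ih]
      ring
  intro x
  have := key x.val
  rwa [ZMod.natCast_val, ZMod.cast_id] at this
end

section
/- Let G be a group acting on a set X, and let i : X → G be an equivariant map for the conjugation action of G on itself, i.e. i(g • x) = g · i(x) · g⁻¹ for all g ∈ G and x ∈ X. Then the map S : X × X → X × X defined by S(x,y) = (i(x) • y, x) makes (X, S) a nondegenerate braided set, and (X, S) is a derived solution (S(x,y) = (φ(y,x), x) with φ(y,x) = i(x) • y). -/
/-- Derived solutions from group actions: if `G` acts on `X` and `i : X → G` is
equivariant for the conjugation action, then `S(x,y) = (i(x) • y, x)` is a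
nondegenerate braided set, and it is a derived solution. -/
theorem equivariant_map_gives_derived_solution
    {G : Type*} [Group G] {X : Type*} [MulAction G X] (i : X → G)
    (hi : ∀ (g : G) (x : X), i (g • x) = g * i x * g⁻¹) :
    IsBraidedSet (fun xy : X × X => (i xy.1 • xy.2, xy.1)) ∧
    Nondegenerate (fun xy : X × X => (i xy.1 • xy.2, xy.1)) ∧
    (∃ φ : X × X → X, ∀ x y : X,
      (fun xy : X × X => (i xy.1 • xy.2, xy.1)) (x, y) = (φ (y, x), x)) := by
  refine ⟨⟨?_, ?_⟩, ⟨?_, ?_⟩, ⟨fun yx => i yx.2 • yx.1, fun x y => rfl⟩⟩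
  · exact Function.bijective_iff_has_inverse.mpr
      ⟨fun ab => (ab.2, (i ab.2)⁻¹ • ab.1),
       fun xy => by simp, fun ab => by simp⟩
  · funext t
    obtain ⟨x, y, z⟩ := t
    simp only [braidL, braidR, Function.comp_apply, hi, Prod.mk.injEq]
    simp [mul_smul]
  · intro x
    exact Function.bijective_iff_has_inverse.mpr
      ⟨fun y => (i x)⁻¹ • y, fun y => by simp, fun y => by simp⟩
  · intro y
    exact Function.bijective_id
end

section
/- Let (X, S) be a nondegenerate braided set with X finite, and suppose X is the disjoint union of two nonempty subsets X₁ and X₂ with S(X₁ × X₁) ⊆ X₁ × X₁ and S(X₂ × X₂) ⊆ X₂ × X₂. Then S(X₁ × X₂) = X₂ × X₁ and S(X₂ × X₁) = X₁ × X₂. -/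
/-- A bijection of a finite type that maps a set into itself maps it onto itself,
hence membership is reflected. -/
lemma bij_mem_iff {X : Type*} [Finite X] (h : X → X) (hb : Function.Bijective h)
    (A : Set X) (hA : ∀ a ∈ A, h a ∈ A) : ∀ a, h a ∈ A ↔ a ∈ A := by
  have himg : h '' A = A := by
    apply Set.eq_of_subset_of_ncard_le
    · rintro _ ⟨a, ha, rfl⟩; exact hA a ha
    · rw [Set.ncard_image_of_injective A hb.injective]
    · exact A.toFinite
  intro a
  constructor
  · intro hha
    rw [← himg] at hha
    rcases hha with ⟨b, hb', heq⟩
    rwa [← hb.injective heq]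
  · exact hA a

/-- Lemma 2.7 (key step): if a finite nondegenerate braided set decomposes into
invariant parts `X₁, X₂`, then `S(X₁ × X₂) = X₂ × X₁` and
`S(X₂ × X₁) = X₁ × X₂`. -/
theorem decomposition_swaps_mixed_parts
    {X : Type*} [Finite X] (S : X × X → X × X)
    (hB : IsBraidedSet S) (hN : Nondegenerate S)
    (X₁ X₂ : Set X) (h1 : X₁.Nonempty) (h2 : X₂.Nonempty)
    (hdisj : Disjoint X₁ X₂) (hcover : X₁ ∪ X₂ = Set.univ)
    (hS1 : ∀ x ∈ X₁, ∀ y ∈ X₁, (S (x, y)).1 ∈ X₁ ∧ (S (x, y)).2 ∈ X₁)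
    (hS2 : ∀ x ∈ X₂, ∀ y ∈ X₂, (S (x, y)).1 ∈ X₂ ∧ (S (x, y)).2 ∈ X₂) :
    S '' (X₁ ×ˢ X₂) = X₂ ×ˢ X₁ ∧ S '' (X₂ ×ˢ X₁) = X₁ ×ˢ X₂ := by
  have hmem : ∀ x : X, x ∈ X₂ ↔ x ∉ X₁ := by
    intro x
    constructor
    · intro hx2 hx1
      exact hdisj.le_bot ⟨hx1, hx2⟩
    · intro hx1
      have : x ∈ X₁ ∪ X₂ := hcover ▸ Set.mem_univ x
      rcases this with h | h
      · exact absurd h hx1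
      · exact h
  have hmem1 : ∀ x : X, x ∈ X₁ ↔ x ∉ X₂ := by
    intro x
    rw [hmem x]
    tauto
  have hg1 : ∀ x ∈ X₁, ∀ y, ((S (x, y)).1 ∈ X₁ ↔ y ∈ X₁) := fun x hx =>
    bij_mem_iff _ (hN.1 x) X₁ (fun y hy => (hS1 x hx y hy).1)
  have hg2 : ∀ x ∈ X₂, ∀ y, ((S (x, y)).1 ∈ X₂ ↔ y ∈ X₂) := fun x hx =>
    bij_mem_iff _ (hN.1 x) X₂ (fun y hy => (hS2 x hx y hy).1)
  have hf1 : ∀ y ∈ X₁, ∀ x, ((S (x, y)).2 ∈ X₁ ↔ x ∈ X₁) := fun y hy =>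
    bij_mem_iff _ (hN.2 y) X₁ (fun x hx => (hS1 x hx y hy).2)
  have hf2 : ∀ y ∈ X₂, ∀ x, ((S (x, y)).2 ∈ X₂ ↔ x ∈ X₂) := fun y hy =>
    bij_mem_iff _ (hN.2 y) X₂ (fun x hx => (hS2 x hx y hy).2)
  have sub12 : S '' (X₁ ×ˢ X₂) ⊆ X₂ ×ˢ X₁ := by
    rintro _ ⟨⟨x, y⟩, ⟨hx, hy⟩, rfl⟩
    refine ⟨(hmem _).mpr fun h => ((hmem y).mp hy) ((hg1 x hx y).mp h),
      (hmem1 _).mpr fun h => ((hmem1 x).mp hx) ((hf2 y hy x).mp h)⟩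
  have sub21 : S '' (X₂ ×ˢ X₁) ⊆ X₁ ×ˢ X₂ := by
    rintro _ ⟨⟨x, y⟩, ⟨hx, hy⟩, rfl⟩
    refine ⟨(hmem1 _).mpr fun h => ((hmem1 y).mp hy) ((hg2 x hx y).mp h),
      (hmem _).mpr fun h => ((hmem x).mp hx) ((hf1 y hy x).mp h)⟩
  -- cardinalities agree, so the inclusions are equalities
  have hswap : ∀ A B : Set X, (A ×ˢ B).ncard = (B ×ˢ A).ncard := by
    intro A B
    rw [← Set.image_swap_prod B A, Set.ncard_image_of_injective _ Prod.swap_injective]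
  have hcard : ∀ A : Set (X × X), (S '' A).ncard = A.ncard := fun A =>
    Set.ncard_image_of_injective A hB.1.injective
  constructor
  · exact Set.eq_of_subset_of_ncard_le sub12 (by rw [hcard, hswap])
  · exact Set.eq_of_subset_of_ncard_le sub21 (by rw [hcard, hswap])
end

section
/- Let p be a prime and let X be a finite set of cardinality p. Let b, c : X → X be bijections with b ∘ c = c ∘ b, and let S(x,y) = (b(y), c(x)). If the permutation solution (X, S) is indecomposable, then it is isomorphic to a translation solution: there exist a bijection e : X → ℤ/pℤ and elements h₁, h₂ ∈ ℤ/pℤ with (h₁, h₂) ≠ (0,0) such that under e the map S becomes (x,y) ↦ (y + h₁, x + h₂). -/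
/-- An indecomposable permutation solution on a set of prime cardinality is
isomorphic to a translation solution `(x, y) ↦ (y + h₁, x + h₂)` with
`(h₁, h₂) ≠ (0, 0)`. -/
theorem indecomposable_permutation_solution_prime_is_translation
    {p : ℕ} (hp : p.Prime) {X : Type*} [Fintype X] (hcard : Fintype.card X = p)
    (b c : X → X) (hb : Function.Bijective b) (hc : Function.Bijective c)
    (hbc : b ∘ c = c ∘ b)
    (hI : Indecomposable (fun xy : X × X => (b xy.2, c xy.1))) :
    ∃ (e : X ≃ ZMod p) (h₁ h₂ : ZMod p), (h₁, h₂) ≠ (0, 0) ∧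
      ∀ x y : X, e (b y) = e y + h₁ ∧ e (c x) = e x + h₂ := by
  classical
  haveI : Fact p.Prime := ⟨hp⟩
  haveI : NeZero p := ⟨hp.pos.ne'⟩
  have hX : Nonempty X := Fintype.card_pos_iff.mp (hcard ▸ hp.pos)
  obtain ⟨x₀⟩ := hX
  set bE : Equiv.Perm X := Equiv.ofBijective b hb with hbEdef
  set cE : Equiv.Perm X := Equiv.ofBijective c hc with hcEdef
  have hbEa : ∀ x, bE x = b x := fun x => rfl
  have hcEa : ∀ x, cE x = c x := fun x => rfl
  have hcomm : Commute bE cE := by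
    apply Equiv.ext; intro x
    have h := congrFun hbc x
    simp only [Function.comp] at h
    simp only [Equiv.Perm.mul_apply, hbEa, hcEa]
    exact h
  have key : ∀ m n a d : ℤ, (bE ^ m * cE ^ n) * (bE ^ a * cE ^ d)
      = bE ^ (m + a) * cE ^ (n + d) := by
    intro m n a d
    rw [zpow_add, zpow_add]
    simp only [mul_assoc]
    congr 1
    rw [← mul_assoc, (hcomm.symm.zpow_zpow n a).eq, mul_assoc]
  -- the orbit of x₀ under the group generated by bE and cE
  set O : Set X := {x | ∃ m n : ℤ, (bE ^ m * cE ^ n) x₀ = x} with hOdef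
  have hx₀O : x₀ ∈ O := ⟨0, 0, by simp⟩
  have hOclosed : ∀ (u v : ℤ), ∀ x ∈ O, (bE ^ u * cE ^ v) x ∈ O := by
    rintro u v x ⟨m, n, rfl⟩
    exact ⟨u + m, v + n, by rw [← key, Equiv.Perm.mul_apply]⟩
  have hObE : ∀ x ∈ O, bE x ∈ O := by
    intro x hx
    simpa using hOclosed 1 0 x hx
  have hOcE : ∀ x ∈ O, cE x ∈ O := by
    intro x hx
    simpa using hOclosed 0 1 x hx
  have hObE' : ∀ x ∈ O, bE⁻¹ x ∈ O := by
    intro x hx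
    simpa [zpow_neg_one] using hOclosed (-1) 0 x hx
  have hOcE' : ∀ x ∈ O, cE⁻¹ x ∈ O := by
    intro x hx
    simpa [zpow_neg_one] using hOclosed 0 (-1) x hx
  -- transitivity from indecomposability
  have htrans : ∀ x, x ∈ O := by
    by_contra h
    push_neg at h
    obtain ⟨z, hz⟩ := h
    apply hI
    refine ⟨O, Oᶜ, ⟨x₀, hx₀O⟩, ⟨z, hz⟩, disjoint_compl_right, Set.union_compl_self O, ?_, ?_⟩
    · intro x hx y hy
      refine ⟨?_, ?_⟩
      · simpa [hbEa] using hObE y hy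
      · simpa [hcEa] using hOcE x hx
    · intro x hx y hy
      refine ⟨?_, ?_⟩
      · intro hby
        apply hy
        have h2 : bE⁻¹ (bE y) ∈ O := hObE' (bE y) hby
        simpa using h2
      · intro hcx
        apply hx
        have h2 : cE⁻¹ (cE x) ∈ O := hOcE' (cE x) hcx
        simpa using h2
  -- freeness at x₀
  have hfree : ∀ m n : ℤ, (bE ^ m * cE ^ n) x₀ = x₀ → bE ^ m * cE ^ n = 1 := by
    intro m n h
    apply Equiv.ext
    intro x
    obtain ⟨a, d, rfl⟩ := htrans x
    have h1 : (bE ^ m * cE ^ n) * (bE ^ a * cE ^ d) = (bE ^ a * cE ^ d) * (bE ^ m * cE ^ n) := by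
      rw [key, key, add_comm m a, add_comm n d]
    simp only [Equiv.Perm.one_apply]
    rw [← Equiv.Perm.mul_apply, h1, Equiv.Perm.mul_apply, h]
  -- the group G generated by bE and cE
  let G : Subgroup (Equiv.Perm X) :=
    { carrier := {g | ∃ m n : ℤ, bE ^ m * cE ^ n = g}
      one_mem' := ⟨0, 0, by simp⟩
      mul_mem' := by
        rintro g1 g2 ⟨m, n, rfl⟩ ⟨a, d, rfl⟩
        exact ⟨m + a, n + d, (key m n a d).symm⟩
      inv_mem' := by
        rintro g ⟨m, n, rfl⟩
        refine ⟨-m, -n, ?_⟩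
        have h1 : (bE ^ (-m) * cE ^ (-n)) * (bE ^ m * cE ^ n) = 1 := by
          rw [key]; simp
        exact eq_inv_of_mul_eq_one_left h1 }
  have hmemG : ∀ g : Equiv.Perm X, g ∈ G ↔ ∃ m n : ℤ, bE ^ m * cE ^ n = g := fun _ => Iff.rfl
  -- the orbit map G → X is bijective
  have horb : Function.Bijective (fun g : G => (g : Equiv.Perm X) x₀) := by
    constructor
    · rintro ⟨g1, hg1⟩ ⟨g2, hg2⟩ h
      obtain ⟨m, n, rfl⟩ := (hmemG g1).mp hg1
      obtain ⟨a, d, rfl⟩ := (hmemG g2).mp hg2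
      have h' : (bE ^ m * cE ^ n) x₀ = (bE ^ a * cE ^ d) x₀ := h
      have h3 : (bE ^ (m - a) * cE ^ (n - d)) * (bE ^ a * cE ^ d) = bE ^ m * cE ^ n := by
        rw [key, sub_add_cancel, sub_add_cancel]
      have hDA : (bE ^ (m - a) * cE ^ (n - d)) * (bE ^ a * cE ^ d)
          = (bE ^ a * cE ^ d) * (bE ^ (m - a) * cE ^ (n - d)) := by
        rw [key, key, add_comm (m - a) a, add_comm (n - d) d]
      have h2 : (bE ^ (m - a) * cE ^ (n - d)) x₀ = x₀ := by
        apply Equiv.injective (bE ^ a * cE ^ d)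
        rw [← Equiv.Perm.mul_apply, ← hDA, h3, h']
      have h4 := hfree _ _ h2
      refine Subtype.ext ?_
      show bE ^ m * cE ^ n = bE ^ a * cE ^ d
      rw [← h3, h4, one_mul]
    · intro x
      obtain ⟨m, n, hmn⟩ := htrans x
      exact ⟨⟨bE ^ m * cE ^ n, (hmemG _).mpr ⟨m, n, rfl⟩⟩, hmn⟩
  have hcardG : Nat.card G = p := by
    rw [Nat.card_eq_of_bijective _ horb, Nat.card_eq_fintype_card, hcard]
  haveI : IsCyclic G := isCyclic_of_prime_card hcardG
  obtain ⟨g, hg⟩ := (inferInstance : IsCyclic G)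
  have hordg : orderOf g = p := by
    rw [orderOf_eq_card_of_forall_mem_zpowers hg, hcardG]
  set σ : Equiv.Perm X := (g : Equiv.Perm X) with hσdef
  have hordσ : orderOf σ = p := by
    rw [← hordg]
    exact orderOf_injective G.subtype Subtype.coe_injective g
  -- exponent reduction modulo p
  have hred : ∀ t : ℤ, σ ^ t = σ ^ (((t : ZMod p).val : ℤ)) := by
    intro t
    rw [zpow_eq_zpow_iff_modEq, hordσ]
    have h5 : ((((t : ZMod p).val : ℤ)) : ZMod p) = (t : ZMod p) := by
      simp [ZMod.natCast_val, ZMod.cast_id]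
    exact (ZMod.intCast_eq_intCast_iff _ _ _).mp h5.symm
  -- elements of G are powers of σ
  have hpow : ∀ h : Equiv.Perm X, h ∈ G → ∃ t : ℤ, σ ^ t = h := by
    intro h hh
    obtain ⟨t, ht⟩ := hg ⟨h, hh⟩
    refine ⟨t, ?_⟩
    have := congrArg (fun z : G => (z : Equiv.Perm X)) ht
    simpa using this
  have hσG : σ ∈ G := g.2
  have hfreeσ : ∀ t : ℤ, (σ ^ t) x₀ = x₀ → σ ^ t = 1 := by
    intro t ht
    obtain ⟨m', n', hmn'⟩ := (hmemG _).mp (G.zpow_mem hσG t)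
    rw [← hmn'] at ht ⊢
    exact hfree _ _ ht
  -- the coordinate map
  set E : ZMod p → X := fun k => (σ ^ ((k.val : ℤ))) x₀ with hEdef
  have hEinj : Function.Injective E := by
    intro k k' h
    have h' : (σ ^ ((k.val : ℤ))) x₀ = (σ ^ ((k'.val : ℤ))) x₀ := h
    have h2 : (σ ^ ((k.val : ℤ) - (k'.val : ℤ))) x₀ = x₀ := by
      apply Equiv.injective (σ ^ ((k'.val : ℤ)))
      rw [← Equiv.Perm.mul_apply, ← zpow_add, add_sub_cancel, h']
    have h3 := hfreeσ _ h2
    have h4 : ((p : ℤ)) ∣ ((k.val : ℤ) - (k'.val : ℤ)) := by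
      have h6 := orderOf_dvd_iff_zpow_eq_one.mpr h3
      rwa [hordσ] at h6
    have h5 : ((k.val : ℤ) : ZMod p) = ((k'.val : ℤ) : ZMod p) := by
      rwa [← sub_eq_zero, ← Int.cast_sub, ZMod.intCast_zmod_eq_zero_iff_dvd]
    simpa [ZMod.natCast_val, ZMod.cast_id] using h5
  have hEsurj : Function.Surjective E := by
    intro x
    obtain ⟨m, n, hmn⟩ := htrans x
    obtain ⟨t, ht⟩ := hpow (bE ^ m * cE ^ n) ((hmemG _).mpr ⟨m, n, rfl⟩)
    refine ⟨(t : ZMod p), ?_⟩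
    show (σ ^ ((((t : ZMod p)).val : ℤ))) x₀ = x
    rw [← hred t, ht, hmn]
  set Φ : ZMod p ≃ X := Equiv.ofBijective E ⟨hEinj, hEsurj⟩ with hΦdef
  have hstep : ∀ (t : ℤ) (k : ZMod p), (σ ^ t) (Φ k) = Φ (k + (t : ZMod p)) := by
    intro t k
    show (σ ^ t) (E k) = E (k + (t : ZMod p))
    simp only [hEdef]
    rw [← Equiv.Perm.mul_apply, ← zpow_add, hred (t + ((k.val : ℤ)))]
    have hq : ((t + ((k.val : ℤ)) : ℤ) : ZMod p) = k + (t : ZMod p) := by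
      push_cast
      rw [ZMod.natCast_val, ZMod.cast_id]
      ring
    rw [hq]
  obtain ⟨mb, hmb⟩ := hpow bE ((hmemG _).mpr ⟨1, 0, by simp⟩)
  obtain ⟨mc, hmc⟩ := hpow cE ((hmemG _).mpr ⟨0, 1, by simp⟩)
  refine ⟨Φ.symm, (mb : ZMod p), (mc : ZMod p), ?_, ?_⟩
  · intro hcontra
    have hmb0 : ((mb : ZMod p)) = 0 := congrArg Prod.fst hcontra
    have hmc0 : ((mc : ZMod p)) = 0 := congrArg Prod.snd hcontra
    have hσ1 : ∀ t : ℤ, ((t : ZMod p)) = 0 → σ ^ t = 1 := by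
      intro t ht
      apply orderOf_dvd_iff_zpow_eq_one.mp
      rw [hordσ]
      exact_mod_cast (ZMod.intCast_zmod_eq_zero_iff_dvd t p).mp ht
    have hb1 : bE = 1 := by rw [← hmb]; exact hσ1 mb hmb0
    have hc1 : cE = 1 := by rw [← hmc]; exact hσ1 mc hmc0
    obtain ⟨x₁, hx₁⟩ := Fintype.exists_ne_of_one_lt_card (by rw [hcard]; exact hp.one_lt) x₀
    obtain ⟨m, n, hmn⟩ := htrans x₁
    rw [hb1, hc1] at hmn
    simp only [one_zpow, mul_one, Equiv.Perm.one_apply] at hmn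
    exact hx₁ hmn.symm
  · intro x y
    constructor
    · rw [Equiv.symm_apply_eq]
      have h1 : b y = (σ ^ mb) y := by rw [hmb]; rfl
      conv_lhs => rw [h1, ← Φ.apply_symm_apply y]
      rw [hstep]
    · rw [Equiv.symm_apply_eq]
      have h1 : c x = (σ ^ mc) x := by rw [hmc]; rfl
      conv_lhs => rw [h1, ← Φ.apply_symm_apply x]
      rw [hstep]
end
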